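/- Let λ0 > 0 and let ρ : [0,λ0] → [0,1) be continuous, and define δ1(λ) = exp( (1/(2πi)) ∫_0^{λ0} ln(1 − ρ(s))/(s − λ) ds ) for λ ∈ ℂ∖[0,λ0]. Then: (1) δ1 is holomorphic and nowhere zero on ℂ∖[0,λ0]; (2) δ1(λ) → 1 as |λ| → ∞; (3) with K = max_{s∈[0,λ0]} |ln(1−ρ(s))|, one has e^{−K/2} ≤ |δ1(λ)| ≤ e^{K/2} for all λ ∈ ℂ∖[0,λ0], so δ1 and 1/δ1 are bounded; (4) δ1(λ)^{-1} = conj(δ1(conj(λ))) for all λ ∈ ℂ∖[0,λ0]; (5) |δ1(λ)| = 1 for every real λ with λ ∉ [0,λ0]. -/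

import Mathlib

open MeasureTheory intervalIntegral

lemma aux_hasDerivAt (c t x : ℂ) (h : t - x ≠ 0) :
    HasDerivAt (fun y => c / (t - y)) (c / (t - x) ^ 2) x := by
  have h1 : HasDerivAt (fun y : ℂ => t - y) (-1) x := (hasDerivAt_id x).const_sub t
  have h2 := (h1.inv h).const_mul c
  simpa [div_eq_mul_inv] using h2

lemma aux_re (z : ℂ) : ((1 / (2 * (Real.pi:ℂ) * Complex.I)) * z).re = z.im / (2 * Real.pi) := by
  have hπ : Real.pi ≠ 0 := Real.pi_ne_zero
  have h : (1 / (2 * (Real.pi:ℂ) * Complex.I)) = -Complex.I / ((2 * Real.pi : ℝ) : ℂ) := by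
    push_cast
    rw [div_eq_div_iff (by simp [Complex.I_ne_zero, hπ, Complex.ofReal_ne_zero]) (by
      simp [hπ, Complex.ofReal_ne_zero])]
    simp [mul_comm, mul_assoc, Complex.I_mul_I]
    ring_nf
    simp [Complex.I_sq]
  rw [h, div_mul_eq_mul_div, Complex.div_ofReal_re]
  simp [Complex.mul_re]

lemma aux_conj_c : (starRingEnd ℂ) (1 / (2 * (Real.pi:ℂ) * Complex.I)) =
    -(1 / (2 * (Real.pi:ℂ) * Complex.I)) := by
  have h2 : (starRingEnd ℂ) (2 : ℂ) = 2 := by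
    rw [show (2:ℂ) = ((2:ℝ):ℂ) by norm_num, Complex.conj_ofReal]
  have h : (starRingEnd ℂ) (2 * (Real.pi:ℂ) * Complex.I) = -(2 * (Real.pi:ℂ) * Complex.I) := by
    rw [map_mul, map_mul, h2, Complex.conj_I, Complex.conj_ofReal, mul_neg]
  rw [map_div₀, map_one, h, div_neg]

lemma aux_poisson (x y : ℝ) (hy : y ≠ 0) (a b : ℝ) :
    ∫ s in a..b, |y| / ((s - x)^2 + y^2)
      = Real.arctan ((b - x)/|y|) - Real.arctan ((a - x)/|y|) := by
  have hy' : (0:ℝ) < |y| := abs_pos.mpr hy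
  have hden : ∀ s : ℝ, (s - x)^2 + y^2 ≠ 0 := fun s => by positivity
  apply intervalIntegral.integral_eq_sub_of_hasDerivAt
  · intro s hs
    have h1 : HasDerivAt (fun s : ℝ => (s - x)/|y|) (1/|y|) s :=
      ((hasDerivAt_id s).sub_const x).div_const |y|
    have h2 := (Real.hasDerivAt_arctan ((s - x)/|y|)).comp s h1
    convert h2 using 1
    · rfl
    · rfl
    field_simp
    rw [sq_abs]
    ring
  · apply Continuous.intervalIntegrable
    exact continuous_const.div (by continuity) hden


/-- The Deift–Zhou partial transmission function
`δ1(λ) = exp( (1/(2πi)) ∫_0^{λ0} ln(1 − ρ(s))/(s − λ) ds )`. -/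
noncomputable def δ1 (lam0 : ℝ) (ρ : ℝ → ℝ) (lam : ℂ) : ℂ :=
  Complex.exp ((1 / (2 * (Real.pi : ℂ) * Complex.I)) *
    ∫ s in (0:ℝ)..lam0, ((Real.log (1 - ρ s) : ℝ) : ℂ) / ((s : ℂ) - lam))

/-- The segment `[0,λ0] ⊂ ℝ` regarded as a subset of `ℂ`. -/
def segment01 (lam0 : ℝ) : Set ℂ := (fun r : ℝ => (r : ℂ)) '' Set.Icc 0 lam0

/-- basic properties of `δ1`: holomorphy and nonvanishing off the segment,
limit 1 at infinity, two-sided modulus bounds, conjugation symmetry, and unit modulus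
on the real axis off the segment. -/
theorem delta1_properties
    (lam0 : ℝ) (hlam0 : 0 < lam0) (ρ : ℝ → ℝ)
    (hρc : ContinuousOn ρ (Set.Icc 0 lam0))
    (hρ : ∀ s ∈ Set.Icc (0:ℝ) lam0, ρ s ∈ Set.Ico (0:ℝ) 1)
    (K : ℝ)
    (hK : K = sSup ((fun s => |Real.log (1 - ρ s)|) '' Set.Icc (0:ℝ) lam0)) :
    (DifferentiableOn ℂ (δ1 lam0 ρ) (segment01 lam0)ᶜ ∧
      ∀ lam ∈ (segment01 lam0)ᶜ, δ1 lam0 ρ lam ≠ 0) ∧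
    Filter.Tendsto (δ1 lam0 ρ) (Filter.comap (fun z : ℂ => ‖z‖) Filter.atTop) (nhds 1) ∧
    (∀ lam ∈ (segment01 lam0)ᶜ,
      Real.exp (-K / 2) ≤ ‖δ1 lam0 ρ lam‖ ∧
      ‖δ1 lam0 ρ lam‖ ≤ Real.exp (K / 2)) ∧
    (∀ lam ∈ (segment01 lam0)ᶜ,
      (δ1 lam0 ρ lam)⁻¹ = starRingEnd ℂ (δ1 lam0 ρ (starRingEnd ℂ lam))) ∧
    (∀ r : ℝ, (r : ℂ) ∈ (segment01 lam0)ᶜ → ‖δ1 lam0 ρ (r : ℂ)‖ = 1) := by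
  have hlam0' : (0:ℝ) ≤ lam0 := hlam0.le
  set f : ℝ → ℝ := fun s => Real.log (1 - ρ s) with hfdef
  set F : ℂ → ℂ := fun μ => ∫ s in (0:ℝ)..lam0, ((f s : ℝ) : ℂ) / ((s : ℂ) - μ) with hFdef
  have hδeq : δ1 lam0 ρ = fun μ => Complex.exp ((1 / (2 * (Real.pi:ℂ) * Complex.I)) * F μ) :=
    rfl
  have hfc : ContinuousOn f (Set.Icc 0 lam0) := by
    apply ContinuousOn.log (continuousOn_const.sub hρc)
    intro s hs
    have := (hρ s hs).2
    intro h0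
    rw [Pi.sub_apply, sub_eq_zero] at h0
    exact absurd h0.symm (ne_of_lt this)
  have hKb : ∀ s ∈ Set.Icc (0:ℝ) lam0, |f s| ≤ K := by
    intro s hs
    rw [hK]
    exact le_csSup (isCompact_Icc.image_of_continuousOn hfc.abs).bddAbove ⟨s, hs, rfl⟩
  have hK0 : (0:ℝ) ≤ K := le_trans (abs_nonneg _) (hKb 0 ⟨le_refl 0, hlam0'⟩)
  have hopen : IsOpen (segment01 lam0)ᶜ :=
    (isCompact_Icc.image Complex.continuous_ofReal).isClosed.isOpen_compl
  have hne : ∀ μ ∈ (segment01 lam0)ᶜ, ∀ s ∈ Set.Icc (0:ℝ) lam0, ((s:ℂ) - μ) ≠ 0 := by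
    intro μ hμ s hs h0
    exact hμ ⟨s, hs, sub_eq_zero.mp h0⟩
  have hΙ : Set.uIoc (0:ℝ) lam0 = Set.Ioc 0 lam0 := Set.uIoc_of_le hlam0'
  have hΙIcc : Set.uIoc (0:ℝ) lam0 ⊆ Set.Icc 0 lam0 := by
    rw [hΙ]; exact Set.Ioc_subset_Icc_self
  have hcont : ∀ μ ∈ (segment01 lam0)ᶜ,
      ContinuousOn (fun s : ℝ => ((f s : ℝ):ℂ)/((s:ℂ) - μ)) (Set.Icc 0 lam0) := by
    intro μ hμ
    exact (Complex.continuous_ofReal.comp_continuousOn hfc).div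
      ((Complex.continuous_ofReal.continuousOn).sub continuousOn_const) (hne μ hμ)
  have hint : ∀ μ ∈ (segment01 lam0)ᶜ,
      IntervalIntegrable (fun s : ℝ => ((f s : ℝ):ℂ)/((s:ℂ) - μ)) volume 0 lam0 := by
    intro μ hμ
    apply ContinuousOn.intervalIntegrable
    rw [Set.uIcc_of_le hlam0']
    exact hcont μ hμ
  -- Differentiability of F
  have hdiffF : ∀ lam ∈ (segment01 lam0)ᶜ, DifferentiableAt ℂ F lam := by
    intro lam hlam
    obtain ⟨ε2, hε2, hball⟩ := Metric.isOpen_iff.mp hopen lam hlam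
    set ε := ε2 / 2 with hεdef
    have hε : 0 < ε := half_pos hε2
    have hμc : ∀ μ ∈ Metric.ball lam ε, μ ∈ (segment01 lam0)ᶜ := fun μ hμ =>
      hball (Metric.ball_subset_ball (by rw [hεdef]; linarith) hμ)
    have hfar : ∀ μ ∈ Metric.ball lam ε, ∀ s ∈ Set.Icc (0:ℝ) lam0,
        ε ≤ ‖(s:ℂ) - μ‖ := by
      intro μ hμ s hs
      by_contra hlt
      push_neg at hlt
      have h2 : dist ((s:ℂ)) lam < ε2 := by
        calc dist ((s:ℂ)) lam ≤ dist ((s:ℂ)) μ + dist μ lam := dist_triangle _ _ _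
          _ < ε + ε := by
              apply add_lt_add _ (Metric.mem_ball.mp hμ)
              rw [Complex.dist_eq]
              exact hlt
          _ = ε2 := by rw [hεdef]; ring
      exact hball (Metric.mem_ball.mpr h2) ⟨s, hs, rfl⟩
    have key := intervalIntegral.hasDerivAt_integral_of_dominated_loc_of_deriv_le
      (F := fun (μ : ℂ) (s : ℝ) => ((f s : ℝ):ℂ)/((s:ℂ) - μ))
      (F' := fun (μ : ℂ) (s : ℝ) => ((f s : ℝ):ℂ)/(((s:ℂ) - μ)^2))
      (bound := fun _ => K / ε^2) (x₀ := lam) (a := 0) (b := lam0) (μ := volume) (Metric.ball_mem_nhds lam hε)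
      ?_ (hint lam hlam) ?_ ?_ ?_ ?_
    · exact key.2.differentiableAt
    · filter_upwards [Metric.ball_mem_nhds lam hε] with μ hμ
      exact ((hcont μ (hμc μ hμ)).mono hΙIcc).aestronglyMeasurable measurableSet_uIoc
    · apply ContinuousOn.aestronglyMeasurable _ measurableSet_uIoc
      apply ContinuousOn.mono _ hΙIcc
      exact (Complex.continuous_ofReal.comp_continuousOn hfc).div
        (((Complex.continuous_ofReal.continuousOn).sub continuousOn_const).pow 2)
        (fun s hs => pow_ne_zero 2 (hne lam hlam s hs))
    · apply Filter.Eventually.of_forall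
      intro s hs μ hμ
      have hsIcc := hΙIcc hs
      rw [norm_div, Complex.norm_real, norm_pow]
      exact div_le_div₀ hK0 (hKb s hsIcc) (pow_pos hε 2)
        (pow_le_pow_left₀ hε.le (hfar μ hμ s hsIcc) 2)
    · exact intervalIntegrable_const
    · apply Filter.Eventually.of_forall
      intro s hs μ hμ
      exact aux_hasDerivAt _ _ _ (hne μ (hμc μ hμ) s (hΙIcc hs))
  have hdiff : DifferentiableOn ℂ (δ1 lam0 ρ) (segment01 lam0)ᶜ := by
    rw [hδeq]
    intro lam hlam
    exact (((hdiffF lam hlam).const_mul _).cexp).differentiableWithinAt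
  have hnz : ∀ lam ∈ (segment01 lam0)ᶜ, δ1 lam0 ρ lam ≠ 0 := by
    intro lam _
    rw [hδeq]
    exact Complex.exp_ne_zero _
  -- the imaginary part of F
  have himF : ∀ lam ∈ (segment01 lam0)ᶜ,
      (F lam).im = ∫ s in (0:ℝ)..lam0, f s * lam.im / ((s - lam.re)^2 + lam.im^2) := by
    intro lam hlam
    have h1 := Complex.imCLM.intervalIntegral_comp_comm (hint lam hlam)
    have h2 : (F lam).im = ∫ s in (0:ℝ)..lam0, (((f s : ℝ):ℂ)/((s:ℂ) - lam)).im := by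
      rw [hFdef]
      exact h1.symm
    rw [h2]
    apply intervalIntegral.integral_congr
    intro s _
    have hnsq : Complex.normSq ((s:ℂ) - lam) = (s - lam.re)^2 + lam.im^2 := by
      rw [Complex.normSq_apply]
      simp [Complex.sub_re, Complex.sub_im, Complex.ofReal_re, Complex.ofReal_im]
      ring
    show (((f s : ℝ):ℂ)/((s:ℂ) - lam)).im = f s * lam.im / ((s - lam.re)^2 + lam.im^2)
    rw [Complex.div_im, hnsq]
    simp [Complex.ofReal_re, Complex.ofReal_im, Complex.sub_im, Complex.sub_re]
    ring
  have hIm : ∀ lam ∈ (segment01 lam0)ᶜ, |(F lam).im| ≤ K * Real.pi := by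
    intro lam hlam
    rw [himF lam hlam]
    by_cases hy : lam.im = 0
    · simp [hy]
      positivity
    · set x := lam.re
      set y := lam.im
      have hpos : ∀ s : ℝ, (0:ℝ) < (s - x)^2 + y^2 := fun s => by positivity
      have hy' : (0:ℝ) < |y| := abs_pos.mpr hy
      have hcont1 : ContinuousOn (fun s => f s * y / ((s - x)^2 + y^2)) (Set.Icc 0 lam0) :=
        (hfc.mul continuousOn_const).div (by fun_prop) (fun s _ => (hpos s).ne')
      have hint1 : IntervalIntegrable (fun s => f s * y / ((s - x)^2 + y^2)) volume 0 lam0 := by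
        apply ContinuousOn.intervalIntegrable
        rwa [Set.uIcc_of_le hlam0']
      have hint1' : IntervalIntegrable (fun s => |f s * y / ((s - x)^2 + y^2)|) volume 0 lam0 :=
        hint1.abs
      have hint2 : IntervalIntegrable (fun s => K * (|y| / ((s - x)^2 + y^2))) volume 0 lam0 := by
        apply Continuous.intervalIntegrable
        exact continuous_const.mul (continuous_const.div (by fun_prop) (fun s => (hpos s).ne'))
      calc |∫ s in (0:ℝ)..lam0, f s * y / ((s - x)^2 + y^2)|
          ≤ ∫ s in (0:ℝ)..lam0, |f s * y / ((s - x)^2 + y^2)| :=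
            intervalIntegral.abs_integral_le_integral_abs hlam0'
        _ ≤ ∫ s in (0:ℝ)..lam0, K * (|y| / ((s - x)^2 + y^2)) := by
            apply intervalIntegral.integral_mono_on hlam0' hint1' hint2
            intro s hs
            rw [abs_div, abs_mul, abs_of_pos (hpos s), mul_div_assoc]
            apply mul_le_mul_of_nonneg_right (hKb s hs)
            positivity
        _ = K * ∫ s in (0:ℝ)..lam0, |y| / ((s - x)^2 + y^2) :=
            intervalIntegral.integral_const_mul K _
        _ = K * (Real.arctan ((lam0 - x)/|y|) - Real.arctan ((0 - x)/|y|)) := by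
            rw [aux_poisson x y hy]
        _ ≤ K * Real.pi := by
            apply mul_le_mul_of_nonneg_left _ hK0
            have h1 := Real.arctan_lt_pi_div_two ((lam0 - x)/|y|)
            have h2 := Real.neg_pi_div_two_lt_arctan ((0 - x)/|y|)
            linarith
  -- modulus computation
  have habs : ∀ lam, ‖δ1 lam0 ρ lam‖ = Real.exp ((F lam).im / (2 * Real.pi)) := by
    intro lam
    rw [hδeq]
    simp only
    rw [Complex.norm_exp, aux_re]
  have hbnd : ∀ lam ∈ (segment01 lam0)ᶜ,
      Real.exp (-K / 2) ≤ ‖δ1 lam0 ρ lam‖ ∧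
      ‖δ1 lam0 ρ lam‖ ≤ Real.exp (K / 2) := by
    intro lam hlam
    have h2π : (0:ℝ) < 2 * Real.pi := by positivity
    have h2 : |(F lam).im / (2 * Real.pi)| ≤ K / 2 := by
      rw [abs_div, abs_of_pos h2π]
      rw [div_le_div_iff₀ h2π (by norm_num : (0:ℝ) < 2)]
      calc |(F lam).im| * 2 ≤ (K * Real.pi) * 2 := by
            have := hIm lam hlam; linarith
        _ = K * (2 * Real.pi) := by ring
    obtain ⟨hl, hr⟩ := abs_le.mp h2
    constructor <;> rw [habs lam] <;> apply Real.exp_le_exp.mpr <;> linarith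
  -- tendsto
  have habsF : ∀ μ, lam0 < ‖μ‖ → μ ∈ (segment01 lam0)ᶜ := by
    intro μ hμ h
    obtain ⟨s, hs, rfl⟩ := h
    rw [Complex.norm_real, Real.norm_eq_abs, abs_of_nonneg hs.1] at hμ
    exact absurd hs.2 (not_le.mpr hμ)
  have htendF : Filter.Tendsto F (Filter.comap (fun z : ℂ => ‖z‖) Filter.atTop) (nhds 0) := by
    have habsT : Filter.Tendsto (fun z : ℂ => ‖z‖) (Filter.comap (fun z : ℂ => ‖z‖) Filter.atTop)
        Filter.atTop := Filter.tendsto_comap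
    apply squeeze_zero_norm' (a := fun μ => lam0 * (K / (‖μ‖ - lam0)))
    · filter_upwards [habsT.eventually (Filter.eventually_gt_atTop lam0)] with μ hμ
      have hμc := habsF μ hμ
      have hb : ∀ s ∈ Set.uIoc (0:ℝ) lam0,
          ‖((f s : ℝ):ℂ)/((s:ℂ) - μ)‖ ≤ K / (‖μ‖ - lam0) := by
        intro s hs
        have hsIcc := hΙIcc hs
        have hsabs : ‖(s:ℂ)‖ ≤ lam0 := by
          rw [Complex.norm_real, Real.norm_eq_abs, abs_of_nonneg hsIcc.1]
          exact hsIcc.2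
        have h1 : ‖μ‖ - lam0 ≤ ‖(s:ℂ) - μ‖ := by
          calc ‖μ‖ - lam0 ≤ ‖μ‖ - ‖(s:ℂ)‖ := by linarith
            _ ≤ ‖μ - (s:ℂ)‖ := by
                have := norm_sub_norm_le μ ((s:ℂ))
                exact this
            _ = ‖(s:ℂ) - μ‖ := by rw [← neg_sub]; exact norm_neg _
        rw [norm_div, Complex.norm_real]
        exact div_le_div₀ hK0 (hKb s hsIcc) (by linarith) h1
      calc ‖F μ‖ ≤ K / (‖μ‖ - lam0) * |lam0 - 0| :=
            intervalIntegral.norm_integral_le_of_norm_le_const hb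
        _ = lam0 * (K / (‖μ‖ - lam0)) := by
            rw [sub_zero, abs_of_nonneg hlam0']; ring
    · have hden : Filter.Tendsto (fun μ : ℂ => ‖μ‖ - lam0)
          (Filter.comap (fun z : ℂ => ‖z‖) Filter.atTop) Filter.atTop := by
        have := Filter.tendsto_atTop_add_const_right
          (Filter.comap (fun z : ℂ => ‖z‖) Filter.atTop) (-lam0) habsT
        simpa [sub_eq_add_neg] using this
      have h1 : Filter.Tendsto (fun μ : ℂ => K / (‖μ‖ - lam0))
          (Filter.comap (fun z : ℂ => ‖z‖) Filter.atTop) (nhds 0) :=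
        Filter.Tendsto.div_atTop tendsto_const_nhds hden
      have h2 := Filter.Tendsto.const_mul lam0 h1
      simpa using h2
  have htend : Filter.Tendsto (δ1 lam0 ρ) (Filter.comap (fun z : ℂ => ‖z‖) Filter.atTop) (nhds 1) := by
    rw [hδeq]
    have h1 : Filter.Tendsto (fun μ => (1 / (2 * (Real.pi:ℂ) * Complex.I)) * F μ)
        (Filter.comap (fun z : ℂ => ‖z‖) Filter.atTop)
        (nhds ((1 / (2 * (Real.pi:ℂ) * Complex.I)) * 0)) :=
      Filter.Tendsto.const_mul _ htendF
    rw [mul_zero] at h1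
    have h2 := (Complex.continuous_exp.tendsto 0).comp h1
    rw [Complex.exp_zero] at h2
    exact h2
  -- conjugation symmetry
  have hconj : ∀ lam ∈ (segment01 lam0)ᶜ,
      (δ1 lam0 ρ lam)⁻¹ = starRingEnd ℂ (δ1 lam0 ρ (starRingEnd ℂ lam)) := by
    intro lam hlam
    have hcl : (starRingEnd ℂ) lam ∈ (segment01 lam0)ᶜ := by
      intro h
      obtain ⟨s, hs, hEq⟩ := h
      apply hlam
      refine ⟨s, hs, ?_⟩
      have := congrArg (starRingEnd ℂ) hEq
      rwa [Complex.conj_conj, Complex.conj_ofReal] at this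
    have hFconj : (starRingEnd ℂ) (F ((starRingEnd ℂ) lam)) = F lam := by
      have h1 := (Complex.conjCLE.toContinuousLinearMap).intervalIntegral_comp_comm
        (hint _ hcl)
      have h2 : ∀ s : ℝ, Complex.conjCLE (((f s : ℝ):ℂ)/((s:ℂ) - (starRingEnd ℂ) lam))
          = ((f s : ℝ):ℂ)/((s:ℂ) - lam) := by
        intro s
        show (starRingEnd ℂ) (((f s : ℝ):ℂ)/((s:ℂ) - (starRingEnd ℂ) lam))
          = ((f s : ℝ):ℂ)/((s:ℂ) - lam)
        rw [map_div₀, Complex.conj_ofReal, map_sub, Complex.conj_ofReal, Complex.conj_conj]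
      calc (starRingEnd ℂ) (F ((starRingEnd ℂ) lam))
          = Complex.conjCLE (F ((starRingEnd ℂ) lam)) := rfl
        _ = ∫ s in (0:ℝ)..lam0, Complex.conjCLE (((f s : ℝ):ℂ)/((s:ℂ) - (starRingEnd ℂ) lam))
            := h1.symm
        _ = F lam := by
            apply intervalIntegral.integral_congr
            intro s _
            exact h2 s
    rw [hδeq]
    simp only
    rw [← Complex.exp_conj, ← Complex.exp_neg]
    congr 1
    rw [map_mul, aux_conj_c, hFconj]
    ring
  -- unit modulus on the real axis
  have hreal : ∀ r : ℝ, (r : ℂ) ∈ (segment01 lam0)ᶜ → ‖δ1 lam0 ρ (r : ℂ)‖ = 1 := by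
    intro r hr
    rw [habs]
    have h0 : (F (r:ℂ)).im = 0 := by
      rw [himF (r:ℂ) hr]
      simp [Complex.ofReal_im]
    rw [h0]
    simp
  exact ⟨⟨hdiff, hnz⟩, htend, hbnd, hconj, hreal⟩
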